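/- On dS₃, for any smooth scalar σ, the tensor κ_{ab} = σ_a σ_b + h⁽⁰⁾_{ab}(-½ σ_c σ^c + (3/2) σ²), where σ_a = D_a σ, is symmetric, and if σ satisfies □σ + 3σ = 0 then κ_{ab} is divergence-free: D^b κ_{ab} = 0. -/

import Mathlib

noncomputable section

open Real

/-- Points of the coordinate chart `(τ, θ, φ)` on three-dimensional de Sitter space. -/
abbrev Pt := Fin 3 → ℝ

/-- Partial derivative along the `i`-th coordinate. -/
def pd (i : Fin 3) (f : Pt → ℝ) (x : Pt) : ℝ :=
  fderiv ℝ f x (Pi.single i 1)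

/-- The dS₃ metric `h⁽⁰⁾ = -dτ² + cosh²τ (dθ² + sin²θ dφ²)`. -/
def gmet (x : Pt) (a b : Fin 3) : ℝ :=
  if a = b then
    if a = 0 then -1
    else if a = 1 then (Real.cosh (x 0))^2
    else (Real.cosh (x 0))^2 * (Real.sin (x 1))^2
  else 0

/-- The inverse dS₃ metric `h⁽⁰⁾^{ab}`. -/
def ginv (x : Pt) (a b : Fin 3) : ℝ :=
  if a = b then
    if a = 0 then -1
    else if a = 1 then ((Real.cosh (x 0))^2)⁻¹
    else ((Real.cosh (x 0))^2 * (Real.sin (x 1))^2)⁻¹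
  else 0

/-- Christoffel symbols `Γ^c_{ab}` of the Levi-Civita connection of `gmet`. -/
def chr (x : Pt) (a b c : Fin 3) : ℝ :=
  (1/2) * ∑ d, ginv x c d *
    (pd a (fun y => gmet y d b) x + pd b (fun y => gmet y a d) x
      - pd d (fun y => gmet y a b) x)

/-- Covariant derivative of a covector: `(D t)_{ab} = D_a t_b`. -/
def covD1 (t : Pt → Fin 3 → ℝ) (x : Pt) (a b : Fin 3) : ℝ :=
  pd a (fun y => t y b) x - ∑ c, chr x a b c * t x c

/-- Covariant derivative of a rank-2 tensor: `(D T)_{abc} = D_a T_{bc}`. -/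
def covD2 (T : Pt → Fin 3 → Fin 3 → ℝ) (x : Pt) (a b c : Fin 3) : ℝ :=
  pd a (fun y => T y b c) x - ∑ d, chr x a b d * T x d c - ∑ d, chr x a c d * T x b d

/-- Covariant derivative of a rank-3 tensor: `(D T)_{abcd} = D_a T_{bcd}`. -/
def covD3 (T : Pt → Fin 3 → Fin 3 → Fin 3 → ℝ) (x : Pt) (a b c d : Fin 3) : ℝ :=
  pd a (fun y => T y b c d) x - ∑ e, chr x a b e * T x e c d
    - ∑ e, chr x a c e * T x b e d - ∑ e, chr x a d e * T x b c e

/-- Hessian `D_a D_b f` of a scalar. -/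
def hess (f : Pt → ℝ) (x : Pt) (a b : Fin 3) : ℝ :=
  covD1 (fun y c => pd c f y) x a b

/-- The d'Alembertian `□ f = h⁽⁰⁾^{ab} D_a D_b f` on scalars. -/
def boxS (f : Pt → ℝ) (x : Pt) : ℝ :=
  ∑ a, ∑ b, ginv x a b * hess f x a b

/-- The d'Alembertian `□ = D^c D_c` on covectors. -/
def box1 (t : Pt → Fin 3 → ℝ) (x : Pt) (b : Fin 3) : ℝ :=
  ∑ a, ∑ c, ginv x a c * covD2 (fun y => covD1 t y) x a c b

/-- The d'Alembertian `□ = D^c D_c` on rank-2 tensors. -/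
def box2 (T : Pt → Fin 3 → Fin 3 → ℝ) (x : Pt) (b c : Fin 3) : ℝ :=
  ∑ a, ∑ d, ginv x a d * covD3 (fun y => covD2 T y) x a d b c

/-- The Levi-Civita symbol on three indices. -/
def levi (a b c : Fin 3) : ℝ :=
  ((((b : ℤ) - a) * ((c : ℤ) - b) * ((c : ℤ) - a) : ℤ) : ℝ) / 2

/-- The volume form `ε_{abc}` of dS₃, normalized by `ε_{τθφ} = cosh²τ sin θ`. -/
def eps (x : Pt) (a b c : Fin 3) : ℝ :=
  (Real.cosh (x 0))^2 * Real.sin (x 1) * levi a b c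

/-- The curl `(curl T)_{ab} = ε_a{}^{cd} D_c T_{db}` of a rank-2 tensor. -/
def curl (T : Pt → Fin 3 → Fin 3 → ℝ) (x : Pt) (a b : Fin 3) : ℝ :=
  ∑ c, ∑ d, ∑ e, ∑ f, ginv x c e * ginv x d f * eps x a e f * covD2 T x c d b

/-- The stress tensor `κ_{ab} = σ_a σ_b + h⁽⁰⁾_{ab}(-½ σ_c σ^c + (3/2) σ²)`. -/
def kappa (σ : Pt → ℝ) (x : Pt) (a b : Fin 3) : ℝ :=
  pd a σ x * pd b σ x
    + gmet x a b * (-(1/2) * (∑ c, ∑ d, ginv x c d * pd c σ x * pd d σ x)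
        + (3/2) * (σ x)^2)


section helpers

section pdcalc
variable {f g : Pt → ℝ} {x : Pt} {i : Fin 3} {c : ℝ}

theorem pd_const : pd i (fun _ => c) x = 0 := by simp [pd]

theorem pd_add (hf : DifferentiableAt ℝ f x) (hg : DifferentiableAt ℝ g x) :
    pd i (fun y => f y + g y) x = pd i f x + pd i g x := by
  simp [pd, fderiv_fun_add hf hg]

theorem pd_mul (hf : DifferentiableAt ℝ f x) (hg : DifferentiableAt ℝ g x) :
    pd i (fun y => f y * g y) x = pd i f x * g x + f x * pd i g x := by
  simp [pd, fderiv_fun_mul hf hg]; ring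

theorem pd_neg : pd i (fun y => -f y) x = -pd i f x := by
  simp [pd, fderiv_neg]

theorem pd_const_mul (hf : DifferentiableAt ℝ f x) :
    pd i (fun y => c * f y) x = c * pd i f x := by
  simp [pd, fderiv_const_mul hf c]

theorem pd_sq (hf : DifferentiableAt ℝ f x) :
    pd i (fun y => f y ^ 2) x = 2 * f x * pd i f x := by
  have : (fun y => f y ^ 2) = fun y => f y * f y := by ext y; ring
  rw [this, pd_mul hf hf]; ring

end pdcalc

section metder
variable {x : Pt} (i : Fin 3)

private def pr (j : Fin 3) : (Fin 3 → ℝ) →L[ℝ] ℝ := ContinuousLinearMap.proj j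

theorem hasF_proj {x : Pt} (j : Fin 3) : HasFDerivAt (fun y : Pt => y j) (pr j) x := by
  exact (pr j).hasFDerivAt

theorem hasF_ch {x : Pt} : HasFDerivAt (fun y : Pt => cosh (y 0)) (sinh (x 0) • pr 0) x :=
  ((Real.hasDerivAt_cosh (x 0)).comp_hasFDerivAt x (hasF_proj 0) :)

theorem hasF_sin {x : Pt} : HasFDerivAt (fun y : Pt => sin (y 1)) (cos (x 1) • pr 1) x :=
  ((Real.hasDerivAt_sin (x 1)).comp_hasFDerivAt x (hasF_proj 1) :)

theorem hasF_chsq {x : Pt} :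
    HasFDerivAt (fun y : Pt => cosh (y 0) ^ 2) ((2 * cosh (x 0) * sinh (x 0)) • pr 0) x := by
  have h := hasF_ch (x := x).fun_mul (hasF_ch (x := x))
  have e : (fun y : Pt => cosh (y 0) ^ 2) = fun y => cosh (y 0) * cosh (y 0) := by
    ext y; ring
  rw [e]
  refine h.congr_fderiv ?_
  ext v
  simp [pr]; ring

theorem hasF_sinsq {x : Pt} :
    HasFDerivAt (fun y : Pt => sin (y 1) ^ 2) ((2 * sin (x 1) * cos (x 1)) • pr 1) x := by
  have h := hasF_sin (x := x).fun_mul (hasF_sin (x := x))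
  have e : (fun y : Pt => sin (y 1) ^ 2) = fun y => sin (y 1) * sin (y 1) := by
    ext y; ring
  rw [e]
  refine h.congr_fderiv ?_
  ext v
  simp [pr]; ring

theorem pd_ch : pd i (fun y : Pt => cosh (y 0)) x = if i = 0 then sinh (x 0) else 0 := by
  rw [pd, hasF_ch.fderiv]
  have : pr 0 (Pi.single i 1) = if i = 0 then (1:ℝ) else 0 := by
    simp [pr, Pi.single_apply, eq_comm]
  simp [this]

theorem pd_sinθ : pd i (fun y : Pt => sin (y 1)) x = if i = 1 then cos (x 1) else 0 := by
  rw [pd, hasF_sin.fderiv]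
  have : pr 1 (Pi.single i 1) = if i = 1 then (1:ℝ) else 0 := by
    simp [pr, Pi.single_apply, eq_comm]
  simp [this]

theorem pr_single (j i : Fin 3) : pr j (Pi.single i 1) = if i = j then (1:ℝ) else 0 := by
  simp [pr, Pi.single_apply, eq_comm]

theorem pd_chsq : pd i (fun y : Pt => cosh (y 0) ^ 2) x
    = if i = 0 then 2 * cosh (x 0) * sinh (x 0) else 0 := by
  rw [pd, hasF_chsq.fderiv]
  simp [pr_single]

theorem pd_chsq_sinsq : pd i (fun y : Pt => cosh (y 0) ^ 2 * sin (y 1) ^ 2) x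
    = if i = 0 then 2 * cosh (x 0) * sinh (x 0) * sin (x 1) ^ 2
      else if i = 1 then cosh (x 0) ^ 2 * (2 * sin (x 1) * cos (x 1)) else 0 := by
  rw [pd, (hasF_chsq.fun_mul hasF_sinsq).fderiv]
  simp [pr_single]
  fin_cases i <;> simp <;> ring

theorem pd_inv_chsq : pd i (fun y : Pt => (cosh (y 0) ^ 2)⁻¹) x
    = if i = 0 then -(2 * cosh (x 0) * sinh (x 0)) / (cosh (x 0) ^ 2) ^ 2 else 0 := by
  have hne : cosh (x 0) ^ 2 ≠ 0 := by positivity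
  have h : HasFDerivAt (fun y : Pt => (cosh (y 0) ^ 2)⁻¹)
      ((-((cosh (x 0) ^ 2) ^ 2)⁻¹) • ((2 * cosh (x 0) * sinh (x 0)) • pr 0)) x :=
    (hasDerivAt_inv hne).comp_hasFDerivAt x hasF_chsq
  rw [pd, h.fderiv]
  simp [pr_single]
  fin_cases i <;> simp <;> ring

theorem pd_inv_chsq_sinsq (hs : sin (x 1) ≠ 0) :
    pd i (fun y : Pt => (cosh (y 0) ^ 2 * sin (y 1) ^ 2)⁻¹) x
    = if i = 0 then -(2 * cosh (x 0) * sinh (x 0) * sin (x 1) ^ 2) / (cosh (x 0) ^ 2 * sin (x 1) ^ 2) ^ 2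
      else if i = 1 then -(cosh (x 0) ^ 2 * (2 * sin (x 1) * cos (x 1))) / (cosh (x 0) ^ 2 * sin (x 1) ^ 2) ^ 2
      else 0 := by
  have hne : cosh (x 0) ^ 2 * sin (x 1) ^ 2 ≠ 0 := by
    have : cosh (x 0) ≠ 0 := by positivity
    positivity
  have h : HasFDerivAt (fun y : Pt => (cosh (y 0) ^ 2 * sin (y 1) ^ 2)⁻¹)
      ((-((cosh (x 0) ^ 2 * sin (x 1) ^ 2) ^ 2)⁻¹) •
        (cosh (x 0) ^ 2 • ((2 * sin (x 1) * cos (x 1)) • pr 1)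
          + sin (x 1) ^ 2 • ((2 * cosh (x 0) * sinh (x 0)) • pr 0))) x :=
    (hasDerivAt_inv hne).comp_hasFDerivAt x (hasF_chsq.fun_mul hasF_sinsq)
  rw [pd, h.fderiv]
  simp [pr_single]
  fin_cases i <;> simp <;> ring

end metder

theorem chr_eq (x : Pt) (hs : Real.sin (x 1) ≠ 0) (a b c : Fin 3) :
    chr x a b c =
      if c = 0 then
        (if a = 1 ∧ b = 1 then cosh (x 0) * sinh (x 0)
         else if a = 2 ∧ b = 2 then cosh (x 0) * sinh (x 0) * sin (x 1) ^ 2 else 0)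
      else if c = 1 then
        (if (a = 0 ∧ b = 1) ∨ (a = 1 ∧ b = 0) then sinh (x 0) / cosh (x 0)
         else if a = 2 ∧ b = 2 then -(sin (x 1) * cos (x 1)) else 0)
      else
        (if (a = 0 ∧ b = 2) ∨ (a = 2 ∧ b = 0) then sinh (x 0) / cosh (x 0)
         else if (a = 1 ∧ b = 2) ∨ (a = 2 ∧ b = 1) then cos (x 1) / sin (x 1) else 0) := by
  have hch : cosh (x 0) ≠ 0 := by positivity
  fin_cases a <;> fin_cases b <;> fin_cases c <;>
    · simp [chr, Fin.sum_univ_three, gmet, ginv, pd_chsq, pd_chsq_sinsq, pd_const]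
      try field_simp
      try ring

section sigma
variable {σ : Pt → ℝ}

theorem pd_pd_eq (hσ : ContDiff ℝ (⊤ : ℕ∞) σ) (x : Pt) (i j : Fin 3) :
    pd i (fun y => pd j σ y) x = fderiv ℝ (fderiv ℝ σ) x (Pi.single i 1) (Pi.single j 1) := by
  unfold pd
  rw [fderiv_clm_apply ((hσ.fderiv_right (m := 1) (WithTop.coe_le_coe.mpr le_top)).differentiable one_ne_zero).differentiableAt
    (differentiableAt_const _)]
  simp

theorem pd_pd_symm (hσ : ContDiff ℝ (⊤ : ℕ∞) σ) (x : Pt) (i j : Fin 3) :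
    pd i (fun y => pd j σ y) x = pd j (fun y => pd i σ y) x := by
  rw [pd_pd_eq hσ x, pd_pd_eq hσ x]
  exact (hσ.contDiffAt.isSymmSndFDerivAt (by rw [minSmoothness_of_isRCLikeNormedField]; exact WithTop.coe_le_coe.mpr le_top)).eq _ _

end sigma

end helpers

set_option maxHeartbeats 4000000 in
/-- `κ_{ab}` is symmetric, and if `□σ + 3σ = 0` then `D^b κ_{ab} = 0` on dS₃. -/
theorem kappa_symmetric_divergence_free (σ : Pt → ℝ) (hσ : ContDiff ℝ (⊤ : ℕ∞) σ)
    (hwave : ∀ x : Pt, Real.sin (x 1) ≠ 0 → boxS σ x + 3 * σ x = 0) :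
    (∀ x : Pt, ∀ a b : Fin 3, kappa σ x a b = kappa σ x b a) ∧
    (∀ x : Pt, Real.sin (x 1) ≠ 0 → ∀ a : Fin 3,
      (∑ b, ∑ c, ginv x b c * covD2 (fun y => kappa σ y) x b a c) = 0) := by
  constructor
  · intro x a b
    have hg : gmet x a b = gmet x b a := by
      unfold gmet
      rcases eq_or_ne a b with h | h
      · subst h; rfl
      · rw [if_neg h, if_neg (Ne.symm h)]
    unfold kappa
    rw [hg]; ring
  · intro x hs a
    have hch : cosh (x 0) ≠ 0 := by positivity
    have hσd : Differentiable ℝ σ := hσ.differentiable (by simp)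
    have hpd : ∀ j : Fin 3, Differentiable ℝ (fun y => pd j σ y) := fun j =>
      ((hσ.fderiv_right (m := 1) (WithTop.coe_le_coe.mpr le_top)).differentiable one_ne_zero).clm_apply (differentiable_const _)
    have hp0 := hpd 0
    have hp1 := hpd 1
    have hp2 := hpd 2
    have h10 := pd_pd_symm hσ x 1 0
    have h20 := pd_pd_symm hσ x 2 0
    have h21 := pd_pd_symm hσ x 2 1
    have pib := fun i => pd_inv_chsq_sinsq (x := x) i hs
    have hAne : cosh (x 0) ^ 2 ≠ 0 := by positivity
    have hBne : cosh (x 0) ^ 2 * sin (x 1) ^ 2 ≠ 0 := by positivity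
    have key : (∑ b, ∑ c, ginv x b c * covD2 (fun y => kappa σ y) x b a c)
        = pd a σ x * (boxS σ x + 3 * σ x) := by
      fin_cases a <;>
      · simp only [covD2, covD1, kappa, boxS, hess, Fin.sum_univ_three]
        simp only [Fin.zero_eta, Fin.mk_one, Fin.reduceFinMk, gmet, ginv, chr_eq x hs,
          Fin.reduceEq, reduceIte, and_self, and_true,
          true_and, and_false, false_and, or_self, or_true, true_or, or_false, if_true, if_false]
        simp (disch := fun_prop (disch := assumption)) only
          [pd_add, pd_mul, pd_neg, pd_const_mul, pd_sq, pd_const,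
           pd_chsq, pd_chsq_sinsq, pd_inv_chsq, pd_ch, pd_sinθ, pib, Fin.reduceEq, reduceIte]
        try simp only [h10, h20, h21]
        field_simp
        ring
    rw [key, hwave x hs, mul_zero]
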